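/- arXiv:1501.03809 — 2 statements merged into one kernel-verified Lean document; each statement's English description precedes it below -/
import Mathlib

section
/- Let A, B, C, D be rationals satisfying A^4 + D^4 = 2(B^4 + C^4), and let S^2 := (2A^4B^4 + 2A^4C^4 + 2B^4C^4 - A^8 - B^8 - C^8)/16. Then the point (x, y) = (B^2 D^2, B D (B^4 + D^4 - C^4)/2) satisfies y^2 = x^3 - 4 S^2 x. -/
theorem stmt_9 (A B C D S : ℚ)
    (h : A^4 + D^4 = 2 * (B^4 + C^4))
    (hS : S^2 = (2*A^4*B^4 + 2*A^4*C^4 + 2*B^4*C^4 - A^8 - B^8 - C^8) / 16) :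
    (B * D * (B^4 + D^4 - C^4) / 2)^2 = (B^2 * D^2)^3 - 4 * S^2 * (B^2 * D^2) := by
  linear_combination (4*B^2*D^2) * hS + (B^2*D^2*(D^4-A^4)/4) * h
end

section
/- Let A, B, C, D be rationals satisfying A^4 + D^4 = 2(B^4 + C^4), and let S^2 := (2A^4B^4 + 2A^4C^4 + 2B^4C^4 - A^8 - B^8 - C^8)/16. Then the point (x, y) = (C^2 D^2, C D (C^4 + D^4 - B^4)/2) satisfies y^2 = x^3 - 4 S^2 x. -/
theorem stmt_10 (A B C D S : ℚ)
    (h : A^4 + D^4 = 2 * (B^4 + C^4))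
    (hS : S^2 = (2*A^4*B^4 + 2*A^4*C^4 + 2*B^4*C^4 - A^8 - B^8 - C^8) / 16) :
    (C * D * (C^4 + D^4 - B^4) / 2)^2 = (C^2 * D^2)^3 - 4 * S^2 * (C^2 * D^2) := by
  linear_combination (4*C^2*D^2) * hS + ((C^2*D^6 - A^4*C^2*D^2)/4) * h
end
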